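/- Fix i ∈ {1,2}. Suppose D^{(ii)}(x,y) < 0 for every x,y ∈ ℝ^d with x ≠ y, and K^{(ii)}(x,x) = K^{(ii)}(y,y) for all x,y ∈ ℝ^d. Then every energy minimizer ρ_* has species i aggregated: there exists an index ι_i ∈ {1,…,N} with ρ_*^{(i)}(x_{ι_i}) = 1 (and the mass of species i vanishes at all other vertices). -/
import Mathlib


open Finset

/-- The nonlocal cross-interaction energy on a finite graph with vertices `x`,
vertex weights `μ`, kernels `K`, and two-species densities `ρ`. -/
noncomputable def energyGG {N d : ℕ} (x : Fin N → EuclideanSpace ℝ (Fin d)) (μ : Fin N → ℝ)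
    (K : Fin 2 → Fin 2 → EuclideanSpace ℝ (Fin d) → EuclideanSpace ℝ (Fin d) → ℝ)
    (ρ : Fin 2 → Fin N → ℝ) : ℝ :=
  (1 / 2) * ∑ i : Fin 2, ∑ k : Fin 2, ∑ ι : Fin N, ∑ κ : Fin N,
    K i k (x ι) (x κ) * ρ i ι * ρ k κ * (μ ι * μ κ)

/-- A two-species distribution: nonnegative densities with total mass one for each species. -/
def IsDistGG {N : ℕ} (μ : Fin N → ℝ) (ρ : Fin 2 → Fin N → ℝ) : Prop :=
  (∀ i ι, 0 ≤ ρ i ι) ∧ ∀ i, ∑ ι : Fin N, ρ i ι * μ ι = 1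

/-- One block of the interaction energy. -/
noncomputable def TGG {N d : ℕ} (x : Fin N → EuclideanSpace ℝ (Fin d)) (μ : Fin N → ℝ)
    (K : Fin 2 → Fin 2 → EuclideanSpace ℝ (Fin d) → EuclideanSpace ℝ (Fin d) → ℝ)
    (ρ : Fin 2 → Fin N → ℝ) (s t : Fin 2) : ℝ :=
  ∑ ι : Fin N, ∑ κ : Fin N, K s t (x ι) (x κ) * ρ s ι * ρ t κ * (μ ι * μ κ)

lemma energy_split {N d : ℕ} (x : Fin N → EuclideanSpace ℝ (Fin d)) (μ : Fin N → ℝ)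
    (K : Fin 2 → Fin 2 → EuclideanSpace ℝ (Fin d) → EuclideanSpace ℝ (Fin d) → ℝ)
    (ρ : Fin 2 → Fin N → ℝ) (i j : Fin 2) (h : i ≠ j) :
    energyGG x μ K ρ = (1 / 2) * (TGG x μ K ρ i i + TGG x μ K ρ i j
      + TGG x μ K ρ j i + TGG x μ K ρ j j) := by
  unfold energyGG TGG
  fin_cases i <;> fin_cases j <;> simp_all [Fin.sum_univ_two] <;> ring

theorem aggregation_of_one_species
    (N d : ℕ) (hN : 2 ≤ N) (hd : 1 ≤ d)
    (x : Fin N → EuclideanSpace ℝ (Fin d)) (hx : Function.Injective x)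
    (μ : Fin N → ℝ) (hμ : ∀ ι, 0 < μ ι)
    (K : Fin 2 → Fin 2 → EuclideanSpace ℝ (Fin d) → EuclideanSpace ℝ (Fin d) → ℝ)
    (hKcont : ∀ i k, Continuous fun p : EuclideanSpace ℝ (Fin d) × EuclideanSpace ℝ (Fin d) =>
      K i k p.1 p.2)
    (hKsym : ∀ i k p q, K i k p q = K i k q p)
    (hK12 : ∀ p q, K 0 1 p q = K 1 0 p q)
    (i : Fin 2)
    (hDii : ∀ p q : EuclideanSpace ℝ (Fin d), p ≠ q → K i i p p - K i i p q < 0)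
    (hKdiag : ∀ p q : EuclideanSpace ℝ (Fin d), K i i p p = K i i q q)
    (ρs : Fin 2 → Fin N → ℝ)
    (hρs : IsDistGG μ ρs)
    (hmin : ∀ ρ, IsDistGG μ ρ → energyGG x μ K ρs ≤ energyGG x μ K ρ) :
    ∃ ι₀ : Fin N, ρs i ι₀ * μ ι₀ = 1 ∧ ∀ ι, ι ≠ ι₀ → ρs i ι = 0 := by
  classical
  obtain ⟨hnn, hmass⟩ := hρs
  set j : Fin 2 := if i = 0 then 1 else 0 with hjdef
  have hij : i ≠ j := by fin_cases i <;> simp [hjdef]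
  have hji : j ≠ i := hij.symm
  have hKij : ∀ p q, K j i p q = K i j q p := by
    fin_cases i <;> intro p q <;> simp only [hjdef] <;> norm_num
    · rw [← hK12, hKsym]
    · rw [hK12, hKsym]
  set m : Fin N → ℝ := fun ι => ρs i ι * μ ι with hmdef
  have hm0 : ∀ ι, 0 ≤ m ι := fun ι => mul_nonneg (hnn i ι) (hμ ι).le
  have hm1 : ∑ ι, m ι = 1 := hmass i
  obtain ⟨a, ha⟩ : ∃ a, m a ≠ 0 := by
    by_contra h
    push_neg at h
    rw [Finset.sum_congr rfl fun ι _ => h ι] at hm1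
    simp at hm1
  by_cases hconc : ∀ b, b ≠ a → m b = 0
  · refine ⟨a, ?_, ?_⟩
    · have h1 : ∑ ι, m ι = m a :=
        Finset.sum_eq_single a (fun b _ hb => hconc b hb) (by simp)
      have : m a = 1 := by rw [← h1, hm1]
      simpa [hmdef] using this
    · intro ι hι
      have h0 : m ι = 0 := hconc ι hι
      have := (hμ ι).ne'
      rcases mul_eq_zero.mp h0 with h | h
      · exact h
      · exact absurd h this
  · exfalso
    push_neg at hconc
    obtain ⟨b, hba, hb⟩ := hconc
    have hma : 0 < m a := lt_of_le_of_ne (hm0 a) (Ne.symm ha)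
    have hmb : 0 < m b := lt_of_le_of_ne (hm0 b) (Ne.symm hb)
    set V : Fin N → ℝ := fun ι => ∑ κ, K i j (x ι) (x κ) * ρs j κ * μ κ with hVdef
    obtain ⟨ι₀, -, hι₀⟩ := Finset.exists_min_image Finset.univ V ⟨a, Finset.mem_univ a⟩
    set ρ' : Fin 2 → Fin N → ℝ :=
      fun s ι => if s = i then (if ι = ι₀ then (μ ι₀)⁻¹ else 0) else ρs s ι with hρ'def
    have hρ'j : ρ' j = ρs j := by
      funext ι; simp [hρ'def, hji]
    have hρ'i : ∀ ι, ρ' i ι = if ι = ι₀ then (μ ι₀)⁻¹ else 0 := by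
      intro ι; simp [hρ'def]
    have hdist' : IsDistGG μ ρ' := by
      constructor
      · intro s ι
        by_cases hs : s = i
        · simp only [hρ'def, hs, if_pos rfl]
          split
          · exact (inv_nonneg.mpr (hμ ι₀).le)
          · exact le_refl 0
        · simp only [hρ'def, if_neg hs]; exact hnn s ι
      · intro s
        by_cases hs : s = i
        · subst hs
          rw [Finset.sum_eq_single ι₀
            (fun ι _ hι => by rw [hρ'i ι, if_neg hι, zero_mul]) (by simp)]
          rw [hρ'i ι₀, if_pos rfl, inv_mul_cancel₀ (hμ ι₀).ne']
        · simp only [hρ'def, if_neg hs]; exact hmass s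
    -- symmetric blocks
    have hTsym : ∀ ρ : Fin 2 → Fin N → ℝ, TGG x μ K ρ j i = TGG x μ K ρ i j := by
      intro ρ
      unfold TGG
      rw [Finset.sum_comm]
      refine Finset.sum_congr rfl fun ι _ => Finset.sum_congr rfl fun κ _ => ?_
      rw [hKij]
      ring
    have hjj : TGG x μ K ρ' j j = TGG x μ K ρs j j := by
      unfold TGG
      rw [hρ'j]
    -- factorized cross term
    have hfac : ∀ ρ : Fin 2 → Fin N → ℝ, ρ j = ρs j →
        TGG x μ K ρ i j = ∑ ι, (ρ i ι * μ ι) * V ι := by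
      intro ρ hρ
      unfold TGG
      refine Finset.sum_congr rfl fun ι _ => ?_
      rw [hVdef]
      simp only
      rw [Finset.mul_sum]
      refine Finset.sum_congr rfl fun κ _ => ?_
      rw [hρ]
      ring
    have hcross' : TGG x μ K ρ' i j = V ι₀ := by
      rw [hfac ρ' hρ'j]
      rw [Finset.sum_congr rfl fun ι _ => by rw [hρ'i ι]]
      rw [Finset.sum_congr rfl fun ι _ =>
        show (if ι = ι₀ then (μ ι₀)⁻¹ else 0) * μ ι * V ι
          = if ι = ι₀ then (μ ι₀)⁻¹ * μ ι * V ι else 0 by split <;> simp]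
      rw [Finset.sum_ite_eq' Finset.univ ι₀ fun ι => (μ ι₀)⁻¹ * μ ι * V ι]
      simp [inv_mul_cancel₀ (hμ ι₀).ne']
    have hcross : V ι₀ ≤ TGG x μ K ρs i j := by
      rw [hfac ρs rfl]
      calc V ι₀ = ∑ ι, m ι * V ι₀ := by
            rw [← Finset.sum_mul, hm1, one_mul]
        _ ≤ ∑ ι, m ι * V ι := by
            refine Finset.sum_le_sum fun ι _ => ?_
            exact mul_le_mul_of_nonneg_left (hι₀ ι (Finset.mem_univ ι)) (hm0 ι)
        _ = ∑ ι, (ρs i ι * μ ι) * V ι := rfl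
    -- self-interaction terms
    set c : ℝ := K i i (x ι₀) (x ι₀) with hcdef
    have hkey : ∀ ι κ : Fin N, c ≤ K i i (x ι) (x κ) := by
      intro ι κ
      by_cases hxx : x ι = x κ
      · rw [← hxx, hcdef, hKdiag (x ι₀) (x ι)]
      · have := hDii (x ι) (x κ) hxx
        rw [hcdef, hKdiag (x ι₀) (x ι)]
        linarith
    have hstrict : c < K i i (x a) (x b) := by
      have hxab : x a ≠ x b := fun h => hba ((hx h).symm)
      have := hDii (x a) (x b) hxab
      rw [hcdef, hKdiag (x ι₀) (x a)]
      linarith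
    have hself' : TGG x μ K ρ' i i = c := by
      unfold TGG
      rw [Finset.sum_eq_single ι₀ (fun ι _ hι => Finset.sum_eq_zero fun κ _ => by
        rw [hρ'i ι, if_neg hι]; ring) (by simp)]
      rw [Finset.sum_eq_single ι₀ (fun κ _ hκ => by
        rw [hρ'i κ, if_neg hκ]; ring) (by simp)]
      rw [hρ'i ι₀, if_pos rfl, hcdef]
      have hμ0 := (hμ ι₀).ne'
      field_simp
    have hselfs : c < TGG x μ K ρs i i := by
      have heq : TGG x μ K ρs i i = ∑ ι, ∑ κ, K i i (x ι) (x κ) * m ι * m κ := by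
        unfold TGG
        refine Finset.sum_congr rfl fun ι _ => Finset.sum_congr rfl fun κ _ => ?_
        simp only [hmdef]
        ring
      have hlow : ∑ ι, ∑ κ, c * m ι * m κ = c := by
        calc ∑ ι, ∑ κ, c * m ι * m κ = ∑ ι, c * m ι := by
              refine Finset.sum_congr rfl fun ι _ => ?_
              rw [← Finset.mul_sum, hm1, mul_one]
          _ = c := by rw [← Finset.mul_sum, hm1, mul_one]
      rw [heq, ← hlow]
      refine Finset.sum_lt_sum (fun ι _ => Finset.sum_le_sum fun κ _ => ?_)
        ⟨a, Finset.mem_univ a, ?_⟩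
      · exact mul_le_mul_of_nonneg_right
          (mul_le_mul_of_nonneg_right (hkey ι κ) (hm0 ι)) (hm0 κ)
      · refine Finset.sum_lt_sum (fun κ _ => mul_le_mul_of_nonneg_right
          (mul_le_mul_of_nonneg_right (hkey a κ) (hm0 a)) (hm0 κ))
          ⟨b, Finset.mem_univ b, ?_⟩
        exact mul_lt_mul_of_pos_right (mul_lt_mul_of_pos_right hstrict hma) hmb
    have hE1 := energy_split x μ K ρs i j hij
    have hE2 := energy_split x μ K ρ' i j hij
    have hle := hmin ρ' hdist'
    rw [hE1, hE2, hTsym ρs, hTsym ρ', hjj, hcross', hself'] at hle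
    linarith
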